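/- Substitution and expansion: (1) if Γ, x:δ ⊢ M : τ and Γ ⊢ V : δ, then Γ ⊢ M[V/x] : τ; (2) if Γ ⊢ M[V/x] : τ, then there exists a value type δ such that Γ ⊢ V : δ and Γ, x:δ ⊢ M : τ. -/
import Mathlib


open Classical

/-- Locations -/
abbrev Loc := ℕ

/-! ### Syntax of λimp (de Bruijn indices) -/

mutual
inductive Val : Type where
  | var : ℕ → Val
  | lam : Comp → Val
inductive Comp : Type where
  | ret  : Val → Comp                     -- unit V
  | bind : Comp → Val → Comp              -- M ⋆ V
  | get  : Loc → Comp → Comp              -- get_ℓ(λ.M)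
  | set  : Loc → Val → Comp → Comp        -- set_ℓ(V, M)
end

/-! ### Store and lookup terms -/

mutual
inductive Store : Type where
  | emp : Store
  | upd : Loc → Lkp → Store → Store       -- set_ℓ(u, s)
inductive Lkp : Type where
  | val : Val → Lkp
  | lkp : Loc → Store → Lkp               -- get_ℓ(s)
end

def Store.dom : Store → Finset Loc
  | .emp => ∅
  | .upd ℓ _ s => insert ℓ s.dom

/-- s ∖ ℓ -/
def Store.erase (ℓ : Loc) : Store → Store
  | .emp => .emp
  | .upd ℓ' u s => if ℓ' = ℓ then s.erase ℓ else .upd ℓ' u (s.erase ℓ)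

/-! ### The equational store theory -/

mutual
/-- ⊢ s = t -/
inductive StEq : Store → Store → Prop where
  | refl (s) : StEq s s
  | symm : StEq s t → StEq t s
  | trans : StEq s t → StEq t r → StEq s r
  | congr : LkEq u u' → StEq s s' → StEq (.upd ℓ u s) (.upd ℓ u' s')
  | setGet (h : ℓ ∈ s.dom) : StEq (.upd ℓ (.lkp ℓ s) s) s
  | overwrite : StEq (.upd ℓ u (.upd ℓ w s)) (.upd ℓ u s)
  | commute (h : ℓ ≠ ℓ') :
      StEq (.upd ℓ u (.upd ℓ' w s)) (.upd ℓ' w (.upd ℓ u s))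
/-- ⊢ u = u' -/
inductive LkEq : Lkp → Lkp → Prop where
  | refl (u) : LkEq u u
  | symm : LkEq u v → LkEq v u
  | trans : LkEq u v → LkEq v w → LkEq u w
  | congr (ℓ) (h : ℓ ∈ s.dom) : StEq s s' → LkEq (.lkp ℓ s) (.lkp ℓ s')
  | getSet : LkEq (.lkp ℓ (.upd ℓ u s)) u
  | getSetNe (h : ℓ ≠ ℓ') : LkEq (.lkp ℓ (.upd ℓ' u s)) (.lkp ℓ s)
end

/-- Extensional equivalence s ≃ t of store terms. -/
def StExtEq (s t : Store) : Prop :=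
  s.dom = t.dom ∧ ∀ ℓ ∈ s.dom, LkEq (.lkp ℓ s) (.lkp ℓ t)

/-! ### Normal forms of stores -/

def Store.size : Store → ℕ
  | .emp => 0
  | .upd _ _ s => s.size + 1

theorem Store.erase_size (ℓ : Loc) : (s : Store) → (s.erase ℓ).size ≤ s.size
  | .emp => le_refl _
  | .upd ℓ' u s => by
      unfold Store.erase
      by_cases h : ℓ' = ℓ
      · simpa [h, Store.size] using le_trans (Store.erase_size ℓ s) (Nat.le_succ _)
      · simpa [h, Store.size] using Nat.succ_le_succ (Store.erase_size ℓ s)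

def Store.nf : Store → Store
  | .emp => .emp
  | .upd ℓ u s => .upd ℓ u ((s.erase ℓ).nf)
termination_by s => s.size
decreasing_by
  simp only [Store.size]
  exact Nat.lt_succ_of_le (Store.erase_size ℓ s)

/-! ### Closedness -/

mutual
def Val.ClosedUnder : ℕ → Val → Prop
  | k, .var n => n < k
  | k, .lam M => Comp.ClosedUnder (k+1) M
def Comp.ClosedUnder : ℕ → Comp → Prop
  | k, .ret V => Val.ClosedUnder k V
  | k, .bind M V => Comp.ClosedUnder k M ∧ Val.ClosedUnder k V
  | k, .get _ M => Comp.ClosedUnder (k+1) M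
  | k, .set _ V M => Val.ClosedUnder k V ∧ Comp.ClosedUnder k M
end

mutual
def Store.Closed : Store → Prop
  | .emp => True
  | .upd _ u s => u.Closed ∧ s.Closed
def Lkp.Closed : Lkp → Prop
  | .val V => Val.ClosedUnder 0 V
  | .lkp _ s => s.Closed
end

/-! ### Substitution -/

mutual
def Val.shiftAux (c : ℕ) : Val → Val
  | .var n => if n < c then .var n else .var (n+1)
  | .lam M => .lam (Comp.shiftAux (c+1) M)
def Comp.shiftAux (c : ℕ) : Comp → Comp
  | .ret V => .ret (V.shiftAux c)
  | .bind M V => .bind (M.shiftAux c) (V.shiftAux c)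
  | .get ℓ M => .get ℓ (M.shiftAux (c+1))
  | .set ℓ V M => .set ℓ (V.shiftAux c) (M.shiftAux c)
end

mutual
/-- capture-avoiding substitution of `W` for the variable `k` in a value -/
def Val.substV (k : ℕ) (W : Val) : Val → Val
  | .var n => if n = k then W else if k < n then .var (n-1) else .var n
  | .lam M => .lam (Comp.substC (k+1) (Val.shiftAux 0 W) M)
/-- capture-avoiding substitution of `W` for the variable `k` in a computation: M[W/k] -/
def Comp.substC (k : ℕ) (W : Val) : Comp → Comp
  | .ret V => .ret (Val.substV k W V)
  | .bind M V => .bind (Comp.substC k W M) (Val.substV k W V)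
  | .get ℓ M => .get ℓ (Comp.substC (k+1) (Val.shiftAux 0 W) M)
  | .set ℓ V M => .set ℓ (Val.substV k W V) (Comp.substC k W M)
end

/-- simultaneous substitution of closed values for the free variables 0,…,n-1 -/
def msubst (Vs : List Val) (M : Comp) : Comp :=
  Vs.foldl (fun acc V => Comp.substC 0 V acc) M

/-! ### Small-step reduction on configurations -/

inductive Red : Comp × Store → Comp × Store → Prop where
  | beta : Red (.bind (.ret V) (.lam M), s) (Comp.substC 0 V M, s)
  | bindl : Red (M, s) (N, t) → Red (.bind M V, s) (.bind N V, t)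
  | get : LkEq (.lkp ℓ s) (.val V) → Red (.get ℓ M, s) (Comp.substC 0 V M, s)
  | set : Red (.set ℓ V M, s) (M, .upd ℓ (.val V) s)

/-- reflexive-transitive closure →* -/
def RedStar : Comp × Store → Comp × Store → Prop := Relation.ReflTransGen Red

/-! ### Big-step convergence -/

inductive BigStep : Comp → Store → Val → Store → Prop where
  | ret : BigStep (.ret V) s V s
  | bind : BigStep M s V s' → BigStep (Comp.substC 0 V N) s' W t →
      BigStep (.bind M (.lam N)) s W t
  | get : LkEq (.lkp ℓ s) (.val V) → BigStep (Comp.substC 0 V M) s W t →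
      BigStep (.get ℓ M) s W t
  | set : BigStep M (.upd ℓ (.val V) s) W t → BigStep (.set ℓ V M) s W t

/-- the partial function M(s): the result (V,t) if (M,s) ⇓ (V,t), and ⊥ (i.e. `none`) otherwise -/
noncomputable def run (M : Comp) (s : Store) : Option (Val × Store) :=
  if h : ∃ p : Val × Store, BigStep M s p.1 p.2 then some h.choose else none

/-! ### Intersection types of the four sorts -/

mutual
/-- value types δ -/
inductive TyD : Type where
  | arrow : TyD → TyT → TyD
  | inter : TyD → TyD → TyD
  | omega : TyD
/-- store types σ -/
inductive TyS : Type where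
  | loc : Loc → TyD → TyS
  | inter : TyS → TyS → TyS
  | omega : TyS
/-- result types κ -/
inductive TyC : Type where
  | prod : TyD → TyS → TyC
  | inter : TyC → TyC → TyC
  | omega : TyC
/-- computation types τ -/
inductive TyT : Type where
  | arrow : TyS → TyC → TyT
  | inter : TyT → TyT → TyT
  | omega : TyT
end

def TyS.domS : TyS → Finset Loc
  | .loc ℓ _ => {ℓ}
  | .inter σ σ' => σ.domS ∪ σ'.domS
  | .omega => ∅

/-! ### Subtyping -/

mutual
inductive SubD : TyD → TyD → Prop where
  | refl (δ) : SubD δ δ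
  | trans : SubD δ₁ δ₂ → SubD δ₂ δ₃ → SubD δ₁ δ₃
  | leOmega (δ) : SubD δ .omega
  | interLeft : SubD (TyD.inter δ δ') δ
  | interRight : SubD (TyD.inter δ δ') δ'
  | interGlb : SubD δ δ₁ → SubD δ δ₂ → SubD δ (TyD.inter δ₁ δ₂)
  | interMono : SubD δ₁ δ₁' → SubD δ₂ δ₂' → SubD (TyD.inter δ₁ δ₂) (TyD.inter δ₁' δ₂')
  | omegaArrow : SubD .omega (.arrow .omega .omega)
  | arrowInter : SubD ((TyD.arrow δ τ).inter (.arrow δ τ')) (TyD.arrow δ (TyT.inter τ τ'))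
  | arrowMono : SubD δ' δ → SubT τ τ' → SubD (.arrow δ τ) (.arrow δ' τ')
inductive SubS : TyS → TyS → Prop where
  | refl (σ) : SubS σ σ
  | trans : SubS σ₁ σ₂ → SubS σ₂ σ₃ → SubS σ₁ σ₃
  | leOmega (σ) : SubS σ .omega
  | interLeft : SubS (TyS.inter σ σ') σ
  | interRight : SubS (TyS.inter σ σ') σ'
  | interGlb : SubS σ σ₁ → SubS σ σ₂ → SubS σ (TyS.inter σ₁ σ₂)
  | interMono : SubS σ₁ σ₁' → SubS σ₂ σ₂' → SubS (TyS.inter σ₁ σ₂) (TyS.inter σ₁' σ₂')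
  | locInter : SubS ((TyS.loc ℓ δ).inter (.loc ℓ δ')) (TyS.loc ℓ (TyD.inter δ δ'))
  | locMono : SubD δ δ' → SubS (.loc ℓ δ) (.loc ℓ δ')
inductive SubC : TyC → TyC → Prop where
  | refl (κ) : SubC κ κ
  | trans : SubC κ₁ κ₂ → SubC κ₂ κ₃ → SubC κ₁ κ₃
  | leOmega (κ) : SubC κ .omega
  | interLeft : SubC (TyC.inter κ κ') κ
  | interRight : SubC (TyC.inter κ κ') κ'
  | interGlb : SubC κ κ₁ → SubC κ κ₂ → SubC κ (TyC.inter κ₁ κ₂)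
  | interMono : SubC κ₁ κ₁' → SubC κ₂ κ₂' → SubC (TyC.inter κ₁ κ₂) (TyC.inter κ₁' κ₂')
  | omegaProd : SubC .omega (.prod .omega .omega)
  | prodInter : SubC ((TyC.prod δ σ).inter (.prod δ' σ')) (TyC.prod (TyD.inter δ δ') (TyS.inter σ σ'))
  | prodMono : SubD δ δ' → SubS σ σ' → SubC (.prod δ σ) (.prod δ' σ')
inductive SubT : TyT → TyT → Prop where
  | refl (τ) : SubT τ τ
  | trans : SubT τ₁ τ₂ → SubT τ₂ τ₃ → SubT τ₁ τ₃
  | leOmega (τ) : SubT τ .omega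
  | interLeft : SubT (TyT.inter τ τ') τ
  | interRight : SubT (TyT.inter τ τ') τ'
  | interGlb : SubT τ τ₁ → SubT τ τ₂ → SubT τ (TyT.inter τ₁ τ₂)
  | interMono : SubT τ₁ τ₁' → SubT τ₂ τ₂' → SubT (TyT.inter τ₁ τ₂) (TyT.inter τ₁' τ₂')
  | omegaArrow : SubT .omega (.arrow .omega .omega)
  | arrowInter : SubT ((TyT.arrow σ κ).inter (.arrow σ κ')) (TyT.arrow σ (TyC.inter κ κ'))
  | arrowMono : SubS σ' σ → SubC κ κ' → SubT (.arrow σ κ) (.arrow σ' κ')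
end

/-! ### Finite intersections -/

def InterD (l : List TyD) : TyD := l.foldr TyD.inter TyD.omega
def InterS (l : List TyS) : TyS := l.foldr TyS.inter TyS.omega
def InterC (l : List TyC) : TyC := l.foldr TyC.inter TyC.omega
def InterT (l : List TyT) : TyT := l.foldr TyT.inter TyT.omega

/-! ### Type assignment -/

/-- typing contexts (de Bruijn) -/
abbrev Ctx := List TyD

mutual
inductive TypV : Ctx → Val → TyD → Prop where
  | var : Γ[n]? = some δ → TypV Γ (.var n) δ
  | lam : TypC (δ :: Γ) M τ → TypV Γ (.lam M) (.arrow δ τ)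
  | omega : TypV Γ V .omega
  | inter : TypV Γ V δ → TypV Γ V δ' → TypV Γ V (TyD.inter δ δ')
  | sub : TypV Γ V δ → SubD δ δ' → TypV Γ V δ'
inductive TypC : Ctx → Comp → TyT → Prop where
  | ret : TypV Γ V δ → TypC Γ (.ret V) (.arrow σ (.prod δ σ))
  | bind : TypC Γ M (.arrow σ (.prod δ' σ')) →
      TypV Γ V (.arrow δ' (.arrow σ' (.prod δ'' σ''))) →
      TypC Γ (.bind M V) (.arrow σ (.prod δ'' σ''))
  | get : TypC (δ :: Γ) M (.arrow σ κ) →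
      TypC Γ (.get ℓ M) (.arrow ((TyS.loc ℓ δ).inter σ) κ)
  | set : TypV Γ V δ → TypC Γ M (.arrow ((TyS.loc ℓ δ).inter σ) κ) →
      ℓ ∉ σ.domS → TypC Γ (.set ℓ V M) (.arrow σ κ)
  | omega : TypC Γ M .omega
  | inter : TypC Γ M τ → TypC Γ M τ' → TypC Γ M (TyT.inter τ τ')
  | sub : TypC Γ M τ → SubT τ τ' → TypC Γ M τ'
end

mutual
inductive TypS : Ctx → Store → TyS → Prop where
  | updA : TypL Γ u δ → TypS Γ (.upd ℓ u s) (.loc ℓ δ)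
  | updB : TypS Γ s (.loc ℓ' δ) → ℓ ≠ ℓ' → TypS Γ (.upd ℓ u s) (.loc ℓ' δ)
  | omega : TypS Γ s .omega
  | inter : TypS Γ s σ → TypS Γ s σ' → TypS Γ s (TyS.inter σ σ')
  | sub : TypS Γ s σ → SubS σ σ' → TypS Γ s σ'
inductive TypL : Ctx → Lkp → TyD → Prop where
  | val : TypV Γ V δ → TypL Γ (.val V) δ
  | lkp : TypS Γ s (.loc ℓ δ) → TypL Γ (.lkp ℓ s) δ
  | omega : TypL Γ u .omega
  | inter : TypL Γ u δ → TypL Γ u δ' → TypL Γ u (TyD.inter δ δ')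
  | sub : TypL Γ u δ → SubD δ δ' → TypL Γ u δ'
end

inductive TypConf : Ctx → Comp → Store → TyC → Prop where
  | conf : TypC Γ M (.arrow σ κ) → TypS Γ s σ → TypConf Γ M s κ
  | omega : TypConf Γ M s .omega
  | inter : TypConf Γ M s κ → TypConf Γ M s κ' → TypConf Γ M s (TyC.inter κ κ')
  | sub : TypConf Γ M s κ → SubC κ κ' → TypConf Γ M s κ'

/-! ### Saturated sets -/

mutual
def SatD : TyD → Set Val
  | .omega => {V | Val.ClosedUnder 0 V}
  | .arrow δ τ =>
      {V | Val.ClosedUnder 0 V ∧ ∀ W ∈ SatD δ, Comp.bind (.ret W) V ∈ SatT τ}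
  | .inter δ δ' => SatD δ ∩ SatD δ'
def SatS : TyS → Set Store
  | .omega => {s | s.Closed}
  | .loc ℓ δ =>
      {s | s.Closed ∧ ℓ ∈ s.dom ∧ ∃ V ∈ SatD δ, LkEq (.lkp ℓ s) (.val V)}
  | .inter σ σ' => SatS σ ∩ SatS σ'
def SatC : TyC → Set (Option (Val × Store))
  | .omega => {r | ∀ V t, r = some (V, t) → Val.ClosedUnder 0 V ∧ Store.Closed t}
  | .prod δ σ => {r | ∃ V t, r = some (V, t) ∧ V ∈ SatD δ ∧ t ∈ SatS σ}
  | .inter κ κ' => SatC κ ∩ SatC κ'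
def SatT : TyT → Set Comp
  | .omega => {M | Comp.ClosedUnder 0 M}
  | .arrow σ κ => {M | Comp.ClosedUnder 0 M ∧ ∀ s ∈ SatS σ, run M s ∈ SatC κ}
  | .inter τ τ' => SatT τ ∩ SatT τ'
end
/-! ### Auxiliary lemmas for substitution/expansion -/

theorem getIns (Γ₁ Γ₂ : Ctx) (δ₀ : TyD) (n : ℕ) :
    (Γ₁ ++ δ₀ :: Γ₂)[if n < Γ₁.length then n else n + 1]? = (Γ₁ ++ Γ₂)[n]? := by
  by_cases h : n < Γ₁.length
  · rw [if_pos h, List.getElem?_append_left h, List.getElem?_append_left h]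
  · push_neg at h
    rw [if_neg (by omega), List.getElem?_append_right (by omega),
      List.getElem?_append_right h]
    have h2 : n + 1 - Γ₁.length = (n - Γ₁.length) + 1 := by omega
    rw [h2]
    simp

theorem getRem (Γ₁ Γ₂ : Ctx) (δ : TyD) (n : ℕ) (hne : n ≠ Γ₁.length) :
    (Γ₁ ++ Γ₂)[if n < Γ₁.length then n else n - 1]? = (Γ₁ ++ δ :: Γ₂)[n]? := by
  by_cases h : n < Γ₁.length
  · rw [if_pos h, List.getElem?_append_left h, List.getElem?_append_left h]
  · push_neg at h
    have h' : Γ₁.length < n := lt_of_le_of_ne h (Ne.symm hne)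
    rw [if_neg (by omega), List.getElem?_append_right (by omega),
      List.getElem?_append_right (by omega)]
    have h2 : n - Γ₁.length = (n - 1 - Γ₁.length) + 1 := by omega
    rw [h2]
    simp

theorem getMid (Γ₁ Γ₂ : Ctx) (δ : TyD) : (Γ₁ ++ δ :: Γ₂)[Γ₁.length]? = some δ := by
  rw [List.getElem?_append_right le_rfl]
  simp

/-- Contextual subsumption relation. -/
abbrev CtxLE (Γ' Γ : Ctx) : Prop :=
  ∀ (n : ℕ) (δ : TyD), Γ[n]? = some δ → ∃ δ', Γ'[n]? = some δ' ∧ SubD δ' δ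

theorem CtxLE.cons {Γ' Γ : Ctx} (h : CtxLE Γ' Γ) (hd : TyD) :
    CtxLE (hd :: Γ') (hd :: Γ) := by
  intro n δ hn
  cases n with
  | zero =>
    simp only [List.getElem?_cons_zero, Option.some.injEq] at hn
    exact ⟨hd, by simp, hn ▸ SubD.refl _⟩
  | succ n =>
    simp only [List.getElem?_cons_succ] at hn ⊢
    exact h n δ hn

theorem ctxLE_mid (Γ₁ Γ₂ : Ctx) {δ' δ : TyD} (h : SubD δ' δ) :
    CtxLE (Γ₁ ++ δ' :: Γ₂) (Γ₁ ++ δ :: Γ₂) := by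
  intro n δ₀ hn
  rcases lt_trichotomy n Γ₁.length with hlt | heq | hgt
  · rw [List.getElem?_append_left hlt] at hn
    exact ⟨δ₀, by rw [List.getElem?_append_left hlt]; exact hn, SubD.refl _⟩
  · subst heq
    rw [getMid] at hn
    cases hn
    exact ⟨δ', getMid _ _ _, h⟩
  · rw [List.getElem?_append_right (by omega)] at hn
    have h1 : n - Γ₁.length = (n - Γ₁.length - 1) + 1 := by omega
    rw [h1, List.getElem?_cons_succ] at hn
    refine ⟨δ₀, ?_, SubD.refl _⟩
    rw [List.getElem?_append_right (by omega), h1, List.getElem?_cons_succ]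
    exact hn

/-- Combined induction principle for the mutual typing judgements. -/
theorem Typ.induction {m1 : Ctx → Val → TyD → Prop} {m2 : Ctx → Comp → TyT → Prop}
    (hvar : ∀ (Γ : Ctx) (n : ℕ) (δ : TyD), Γ[n]? = some δ → m1 Γ (.var n) δ)
    (hlam : ∀ (δ : TyD) (Γ : Ctx) (M : Comp) (τ : TyT), TypC (δ :: Γ) M τ →
      m2 (δ :: Γ) M τ → m1 Γ (.lam M) (.arrow δ τ))
    (homega1 : ∀ Γ V, m1 Γ V .omega)
    (hinter1 : ∀ Γ V δ δ', TypV Γ V δ → TypV Γ V δ' → m1 Γ V δ → m1 Γ V δ' →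
      m1 Γ V (.inter δ δ'))
    (hsub1 : ∀ Γ V δ δ', TypV Γ V δ → SubD δ δ' → m1 Γ V δ → m1 Γ V δ')
    (hret : ∀ Γ V δ σ, TypV Γ V δ → m1 Γ V δ → m2 Γ (.ret V) (.arrow σ (.prod δ σ)))
    (hbind : ∀ Γ M σ δ' σ' V δ'' σ'', TypC Γ M (.arrow σ (.prod δ' σ')) →
      TypV Γ V (.arrow δ' (.arrow σ' (.prod δ'' σ''))) →
      m2 Γ M (.arrow σ (.prod δ' σ')) → m1 Γ V (.arrow δ' (.arrow σ' (.prod δ'' σ''))) →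
      m2 Γ (.bind M V) (.arrow σ (.prod δ'' σ'')))
    (hget : ∀ (δ : TyD) (Γ : Ctx) (M : Comp) (σ : TyS) (κ : TyC) (ℓ : Loc),
      TypC (δ :: Γ) M (.arrow σ κ) → m2 (δ :: Γ) M (.arrow σ κ) →
      m2 Γ (.get ℓ M) (.arrow ((TyS.loc ℓ δ).inter σ) κ))
    (hset : ∀ (Γ : Ctx) (V : Val) (δ : TyD) (M : Comp) (ℓ : Loc) (σ : TyS) (κ : TyC),
      TypV Γ V δ → TypC Γ M (.arrow ((TyS.loc ℓ δ).inter σ) κ) → ℓ ∉ TyS.domS σ →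
      m1 Γ V δ → m2 Γ M (.arrow ((TyS.loc ℓ δ).inter σ) κ) →
      m2 Γ (.set ℓ V M) (.arrow σ κ))
    (homega2 : ∀ Γ M, m2 Γ M .omega)
    (hinter2 : ∀ Γ M τ τ', TypC Γ M τ → TypC Γ M τ' → m2 Γ M τ → m2 Γ M τ' →
      m2 Γ M (.inter τ τ'))
    (hsub2 : ∀ Γ M τ τ', TypC Γ M τ → SubT τ τ' → m2 Γ M τ → m2 Γ M τ') :
    (∀ Γ V δ, TypV Γ V δ → m1 Γ V δ) ∧ (∀ Γ M τ, TypC Γ M τ → m2 Γ M τ) :=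
  ⟨fun _ _ _ h =>
    TypV.rec (motive_1 := fun Γ V δ _ => m1 Γ V δ) (motive_2 := fun Γ M τ _ => m2 Γ M τ)
      (fun {Γ n δ} a => hvar Γ n δ a)
      (fun {δ Γ M τ} a ih => hlam δ Γ M τ a ih)
      (fun {Γ V} => homega1 Γ V)
      (fun {Γ V δ δ'} a b ia ib => hinter1 Γ V δ δ' a b ia ib)
      (fun {Γ V δ δ'} a s ia => hsub1 Γ V δ δ' a s ia)
      (fun {Γ V δ σ} a ia => hret Γ V δ σ a ia)
      (fun {Γ M σ δ' σ' V δ'' σ''} a b ia ib => hbind Γ M σ δ' σ' V δ'' σ'' a b ia ib)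
      (fun {δ Γ M σ κ ℓ} a ia => hget δ Γ M σ κ ℓ a ia)
      (fun {Γ V δ M ℓ σ κ} a b c ia ib => hset Γ V δ M ℓ σ κ a b c ia ib)
      (fun {Γ M} => homega2 Γ M)
      (fun {Γ M τ τ'} a b ia ib => hinter2 Γ M τ τ' a b ia ib)
      (fun {Γ M τ τ'} a s ia => hsub2 Γ M τ τ' a s ia)
      h,
   fun _ _ _ h =>
    TypC.rec (motive_1 := fun Γ V δ _ => m1 Γ V δ) (motive_2 := fun Γ M τ _ => m2 Γ M τ)
      (fun {Γ n δ} a => hvar Γ n δ a)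
      (fun {δ Γ M τ} a ih => hlam δ Γ M τ a ih)
      (fun {Γ V} => homega1 Γ V)
      (fun {Γ V δ δ'} a b ia ib => hinter1 Γ V δ δ' a b ia ib)
      (fun {Γ V δ δ'} a s ia => hsub1 Γ V δ δ' a s ia)
      (fun {Γ V δ σ} a ia => hret Γ V δ σ a ia)
      (fun {Γ M σ δ' σ' V δ'' σ''} a b ia ib => hbind Γ M σ δ' σ' V δ'' σ'' a b ia ib)
      (fun {δ Γ M σ κ ℓ} a ia => hget δ Γ M σ κ ℓ a ia)
      (fun {Γ V δ M ℓ σ κ} a b c ia ib => hset Γ V δ M ℓ σ κ a b c ia ib)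
      (fun {Γ M} => homega2 Γ M)
      (fun {Γ M τ τ'} a b ia ib => hinter2 Γ M τ τ' a b ia ib)
      (fun {Γ M τ τ'} a s ia => hsub2 Γ M τ τ' a s ia)
      h⟩

/-! ### Narrowing -/

theorem narrow_thm :
    (∀ Γ V δ, TypV Γ V δ → ∀ Γ', CtxLE Γ' Γ → TypV Γ' V δ) ∧
    (∀ Γ M τ, TypC Γ M τ → ∀ Γ', CtxLE Γ' Γ → TypC Γ' M τ) := by
  refine Typ.induction ?_ ?_ ?_ ?_ ?_ ?_ ?_ ?_ ?_ ?_ ?_ ?_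
  · intro Γ n δ hl Γ' hle
    obtain ⟨δ'', hg, hs⟩ := hle _ _ hl
    exact .sub (.var hg) hs
  · intro δ Γ M τ _ ih Γ' hle
    exact .lam (ih _ (hle.cons _))
  · intro Γ V Γ' _; exact .omega
  · intro Γ V δ δ' _ _ ih1 ih2 Γ' hle; exact .inter (ih1 Γ' hle) (ih2 Γ' hle)
  · intro Γ V δ δ' _ hs ih Γ' hle; exact .sub (ih Γ' hle) hs
  · intro Γ V δ σ _ ih Γ' hle; exact .ret (ih Γ' hle)
  · intro Γ M σ δ' σ' V δ'' σ'' _ _ ih1 ih2 Γ' hle; exact .bind (ih1 Γ' hle) (ih2 Γ' hle)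
  · intro δ Γ M σ κ ℓ _ ih Γ' hle; exact .get (ih _ (hle.cons _))
  · intro Γ V δ M ℓ σ κ _ _ hd ih1 ih2 Γ' hle; exact .set (ih1 Γ' hle) (ih2 Γ' hle) hd
  · intro Γ M Γ' _; exact .omega
  · intro Γ M τ τ' _ _ ih1 ih2 Γ' hle; exact .inter (ih1 Γ' hle) (ih2 Γ' hle)
  · intro Γ M τ τ' _ hs ih Γ' hle; exact .sub (ih Γ' hle) hs

/-! ### Weakening -/

theorem weaken_thm :
    (∀ Γ V δ, TypV Γ V δ → ∀ Γ₁ Γ₂ δ₀, Γ = Γ₁ ++ Γ₂ →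
      TypV (Γ₁ ++ δ₀ :: Γ₂) (Val.shiftAux Γ₁.length V) δ) ∧
    (∀ Γ M τ, TypC Γ M τ → ∀ Γ₁ Γ₂ δ₀, Γ = Γ₁ ++ Γ₂ →
      TypC (Γ₁ ++ δ₀ :: Γ₂) (Comp.shiftAux Γ₁.length M) τ) := by
  refine Typ.induction ?_ ?_ ?_ ?_ ?_ ?_ ?_ ?_ ?_ ?_ ?_ ?_
  · intro Γ n δ hl Γ₁ Γ₂ δ₀ hΓ
    subst hΓ
    have hg := getIns Γ₁ Γ₂ δ₀ n
    simp only [Val.shiftAux]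
    by_cases hc : n < Γ₁.length
    · rw [if_pos hc] at hg ⊢
      exact .var (by rw [hg]; exact hl)
    · rw [if_neg hc] at hg ⊢
      exact .var (by rw [hg]; exact hl)
  · intro δ Γ M τ _ ih Γ₁ Γ₂ δ₀ hΓ
    subst hΓ
    simp only [Val.shiftAux]
    exact .lam (ih (_ :: Γ₁) Γ₂ δ₀ rfl)
  · intro Γ V Γ₁ Γ₂ δ₀ _; exact .omega
  · intro Γ V δ δ' _ _ ih1 ih2 Γ₁ Γ₂ δ₀ hΓ
    exact .inter (ih1 Γ₁ Γ₂ δ₀ hΓ) (ih2 Γ₁ Γ₂ δ₀ hΓ)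
  · intro Γ V δ δ' _ hs ih Γ₁ Γ₂ δ₀ hΓ; exact .sub (ih Γ₁ Γ₂ δ₀ hΓ) hs
  · intro Γ V δ σ _ ih Γ₁ Γ₂ δ₀ hΓ
    simp only [Comp.shiftAux]
    exact .ret (ih Γ₁ Γ₂ δ₀ hΓ)
  · intro Γ M σ δ' σ' V δ'' σ'' _ _ ih1 ih2 Γ₁ Γ₂ δ₀ hΓ
    simp only [Comp.shiftAux]
    exact .bind (ih1 Γ₁ Γ₂ δ₀ hΓ) (ih2 Γ₁ Γ₂ δ₀ hΓ)
  · intro δ Γ M σ κ ℓ _ ih Γ₁ Γ₂ δ₀ hΓ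
    subst hΓ
    simp only [Comp.shiftAux]
    exact .get (ih (_ :: Γ₁) Γ₂ δ₀ rfl)
  · intro Γ V δ M ℓ σ κ _ _ hd ih1 ih2 Γ₁ Γ₂ δ₀ hΓ
    simp only [Comp.shiftAux]
    exact .set (ih1 Γ₁ Γ₂ δ₀ hΓ) (ih2 Γ₁ Γ₂ δ₀ hΓ) hd
  · intro Γ M Γ₁ Γ₂ δ₀ _; exact .omega
  · intro Γ M τ τ' _ _ ih1 ih2 Γ₁ Γ₂ δ₀ hΓ
    exact .inter (ih1 Γ₁ Γ₂ δ₀ hΓ) (ih2 Γ₁ Γ₂ δ₀ hΓ)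
  · intro Γ M τ τ' _ hs ih Γ₁ Γ₂ δ₀ hΓ; exact .sub (ih Γ₁ Γ₂ δ₀ hΓ) hs

/-! ### Strengthening (inverse of weakening) -/

theorem strengthen_thm :
    (∀ Γ W δ, TypV Γ W δ → ∀ Γ₁ Γ₂ δ₀ V, Γ = Γ₁ ++ δ₀ :: Γ₂ →
      W = Val.shiftAux Γ₁.length V → TypV (Γ₁ ++ Γ₂) V δ) ∧
    (∀ Γ N τ, TypC Γ N τ → ∀ Γ₁ Γ₂ δ₀ M, Γ = Γ₁ ++ δ₀ :: Γ₂ →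
      N = Comp.shiftAux Γ₁.length M → TypC (Γ₁ ++ Γ₂) M τ) := by
  refine Typ.induction ?_ ?_ ?_ ?_ ?_ ?_ ?_ ?_ ?_ ?_ ?_ ?_
  · intro Γ m δ hl Γ₁ Γ₂ δ₀ V hΓ hW
    subst hΓ
    cases V with
    | lam M => simp only [Val.shiftAux] at hW; exact Val.noConfusion hW
    | var n =>
      have hg := getIns Γ₁ Γ₂ δ₀ n
      simp only [Val.shiftAux] at hW
      by_cases hc : n < Γ₁.length
      · rw [if_pos hc] at hW hg
        injection hW with h
        subst h
        rw [hg] at hl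
        exact .var hl
      · rw [if_neg hc] at hW hg
        injection hW with h
        subst h
        rw [hg] at hl
        exact .var hl
  · intro δ Γ M τ _ ih Γ₁ Γ₂ δ₀ V hΓ hW
    subst hΓ
    cases V with
    | var n =>
      simp only [Val.shiftAux] at hW
      split at hW <;> exact Val.noConfusion hW
    | lam M₀ =>
      simp only [Val.shiftAux] at hW
      injection hW with h
      exact .lam (ih (_ :: Γ₁) Γ₂ δ₀ M₀ rfl h)
  · intro Γ V Γ₁ Γ₂ δ₀ V' _ _; exact .omega
  · intro Γ W δ δ' _ _ ih1 ih2 Γ₁ Γ₂ δ₀ V hΓ hW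
    exact .inter (ih1 Γ₁ Γ₂ δ₀ V hΓ hW) (ih2 Γ₁ Γ₂ δ₀ V hΓ hW)
  · intro Γ W δ δ' _ hs ih Γ₁ Γ₂ δ₀ V hΓ hW
    exact .sub (ih Γ₁ Γ₂ δ₀ V hΓ hW) hs
  · intro Γ W δ σ _ ih Γ₁ Γ₂ δ₀ M hΓ hW
    cases M with
    | ret V' =>
      simp only [Comp.shiftAux] at hW
      injection hW with h
      exact .ret (ih Γ₁ Γ₂ δ₀ V' hΓ h)
    | bind M' V' => simp only [Comp.shiftAux] at hW; exact Comp.noConfusion hW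
    | get ℓ M' => simp only [Comp.shiftAux] at hW; exact Comp.noConfusion hW
    | set ℓ V' M' => simp only [Comp.shiftAux] at hW; exact Comp.noConfusion hW
  · intro Γ N σ δ' σ' W δ'' σ'' _ _ ih1 ih2 Γ₁ Γ₂ δ₀ M hΓ hW
    cases M with
    | bind M' V' =>
      simp only [Comp.shiftAux] at hW
      injection hW with h1 h2
      exact .bind (ih1 Γ₁ Γ₂ δ₀ M' hΓ h1) (ih2 Γ₁ Γ₂ δ₀ V' hΓ h2)
    | ret V' => simp only [Comp.shiftAux] at hW; exact Comp.noConfusion hW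
    | get ℓ M' => simp only [Comp.shiftAux] at hW; exact Comp.noConfusion hW
    | set ℓ V' M' => simp only [Comp.shiftAux] at hW; exact Comp.noConfusion hW
  · intro δ Γ N σ κ ℓ _ ih Γ₁ Γ₂ δ₀ M hΓ hW
    subst hΓ
    cases M with
    | get ℓ' M₀ =>
      simp only [Comp.shiftAux] at hW
      injection hW with hℓ h
      subst hℓ
      exact .get (ih (_ :: Γ₁) Γ₂ δ₀ M₀ rfl h)
    | ret V' => simp only [Comp.shiftAux] at hW; exact Comp.noConfusion hW
    | bind M' V' => simp only [Comp.shiftAux] at hW; exact Comp.noConfusion hW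
    | set ℓ' V' M' => simp only [Comp.shiftAux] at hW; exact Comp.noConfusion hW
  · intro Γ W δ N ℓ σ κ _ _ hd ih1 ih2 Γ₁ Γ₂ δ₀ M hΓ hW
    cases M with
    | set ℓ' V' M' =>
      simp only [Comp.shiftAux] at hW
      injection hW with hℓ h1 h2
      subst hℓ
      exact .set (ih1 Γ₁ Γ₂ δ₀ V' hΓ h1) (ih2 Γ₁ Γ₂ δ₀ M' hΓ h2) hd
    | ret V' => simp only [Comp.shiftAux] at hW; exact Comp.noConfusion hW
    | bind M' V' => simp only [Comp.shiftAux] at hW; exact Comp.noConfusion hW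
    | get ℓ' M' => simp only [Comp.shiftAux] at hW; exact Comp.noConfusion hW
  · intro Γ N Γ₁ Γ₂ δ₀ M _ _; exact .omega
  · intro Γ N τ τ' _ _ ih1 ih2 Γ₁ Γ₂ δ₀ M hΓ hW
    exact .inter (ih1 Γ₁ Γ₂ δ₀ M hΓ hW) (ih2 Γ₁ Γ₂ δ₀ M hΓ hW)
  · intro Γ N τ τ' _ hs ih Γ₁ Γ₂ δ₀ M hΓ hW
    exact .sub (ih Γ₁ Γ₂ δ₀ M hΓ hW) hs

/-! ### Substitution -/

theorem subst_thm :
    (∀ Γ V₀ δ', TypV Γ V₀ δ' → ∀ Γ₁ δ Γ₂ V, Γ = Γ₁ ++ δ :: Γ₂ →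
      TypV (Γ₁ ++ Γ₂) V δ → TypV (Γ₁ ++ Γ₂) (Val.substV Γ₁.length V V₀) δ') ∧
    (∀ Γ M τ, TypC Γ M τ → ∀ Γ₁ δ Γ₂ V, Γ = Γ₁ ++ δ :: Γ₂ →
      TypV (Γ₁ ++ Γ₂) V δ → TypC (Γ₁ ++ Γ₂) (Comp.substC Γ₁.length V M) τ) := by
  refine Typ.induction ?_ ?_ ?_ ?_ ?_ ?_ ?_ ?_ ?_ ?_ ?_ ?_
  · intro Γ n δ' hl Γ₁ δ Γ₂ V hΓ hV
    subst hΓ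
    simp only [Val.substV]
    by_cases he : n = Γ₁.length
    · rw [if_pos he]
      subst he
      rw [getMid] at hl
      injection hl with h
      subst h
      exact hV
    · rw [if_neg he]
      have hg := getRem Γ₁ Γ₂ δ n he
      by_cases hlt : Γ₁.length < n
      · rw [if_pos hlt]
        rw [if_neg (by omega)] at hg
        exact .var (by rw [hg]; exact hl)
      · rw [if_neg hlt]
        rw [if_pos (by omega)] at hg
        exact .var (by rw [hg]; exact hl)
  · intro δ'' Γ M τ _ ih Γ₁ δ Γ₂ V hΓ hV
    subst hΓ
    simp only [Val.substV]
    exact .lam (ih (_ :: Γ₁) δ Γ₂ _ rfl (weaken_thm.1 _ _ _ hV [] (Γ₁ ++ Γ₂) _ rfl))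
  · intro Γ V Γ₁ δ Γ₂ V' _ _; exact .omega
  · intro Γ V₀ δ' δ'' _ _ ih1 ih2 Γ₁ δ Γ₂ V hΓ hV
    exact .inter (ih1 Γ₁ δ Γ₂ V hΓ hV) (ih2 Γ₁ δ Γ₂ V hΓ hV)
  · intro Γ V₀ δ' δ'' _ hs ih Γ₁ δ Γ₂ V hΓ hV
    exact .sub (ih Γ₁ δ Γ₂ V hΓ hV) hs
  · intro Γ V₀ δ' σ _ ih Γ₁ δ Γ₂ V hΓ hV
    simp only [Comp.substC]
    exact .ret (ih Γ₁ δ Γ₂ V hΓ hV)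
  · intro Γ M σ δ' σ' V₀ δ'' σ'' _ _ ih1 ih2 Γ₁ δ Γ₂ V hΓ hV
    simp only [Comp.substC]
    exact .bind (ih1 Γ₁ δ Γ₂ V hΓ hV) (ih2 Γ₁ δ Γ₂ V hΓ hV)
  · intro δ'' Γ M σ κ ℓ _ ih Γ₁ δ Γ₂ V hΓ hV
    subst hΓ
    simp only [Comp.substC]
    exact .get (ih (_ :: Γ₁) δ Γ₂ _ rfl (weaken_thm.1 _ _ _ hV [] (Γ₁ ++ Γ₂) _ rfl))
  · intro Γ V₀ δ' M ℓ σ κ _ _ hd ih1 ih2 Γ₁ δ Γ₂ V hΓ hV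
    simp only [Comp.substC]
    exact .set (ih1 Γ₁ δ Γ₂ V hΓ hV) (ih2 Γ₁ δ Γ₂ V hΓ hV) hd
  · intro Γ M Γ₁ δ Γ₂ V _ _; exact .omega
  · intro Γ M τ τ' _ _ ih1 ih2 Γ₁ δ Γ₂ V hΓ hV
    exact .inter (ih1 Γ₁ δ Γ₂ V hΓ hV) (ih2 Γ₁ δ Γ₂ V hΓ hV)
  · intro Γ M τ τ' _ hs ih Γ₁ δ Γ₂ V hΓ hV
    exact .sub (ih Γ₁ δ Γ₂ V hΓ hV) hs

/-! ### Expansion -/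

theorem expand_thm :
    (∀ Γ W δ', TypV Γ W δ' → ∀ Γ₁ Γ₂ V V₀, Γ = Γ₁ ++ Γ₂ →
      W = Val.substV Γ₁.length V V₀ →
      ∃ δ, TypV (Γ₁ ++ Γ₂) V δ ∧ TypV (Γ₁ ++ δ :: Γ₂) V₀ δ') ∧
    (∀ Γ N τ, TypC Γ N τ → ∀ Γ₁ Γ₂ V M, Γ = Γ₁ ++ Γ₂ →
      N = Comp.substC Γ₁.length V M →
      ∃ δ, TypV (Γ₁ ++ Γ₂) V δ ∧ TypC (Γ₁ ++ δ :: Γ₂) M τ) := by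
  refine Typ.induction ?_ ?_ ?_ ?_ ?_ ?_ ?_ ?_ ?_ ?_ ?_ ?_
  · intro Γ m δ' hl Γ₁ Γ₂ V V₀ hΓ hW
    subst hΓ
    cases V₀ with
    | lam M₀ => simp only [Val.substV] at hW; exact Val.noConfusion hW
    | var n =>
      simp only [Val.substV] at hW
      by_cases he : n = Γ₁.length
      · rw [if_pos he] at hW
        subst he
        refine ⟨δ', ?_, .var (getMid Γ₁ Γ₂ δ')⟩
        rw [← hW]
        exact .var hl
      · rw [if_neg he] at hW
        have hg := getRem Γ₁ Γ₂ TyD.omega n he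
        refine ⟨.omega, .omega, ?_⟩
        by_cases hlt : Γ₁.length < n
        · rw [if_pos hlt] at hW
          injection hW with h
          subst h
          rw [if_neg (by omega)] at hg
          exact .var (by rw [← hg]; exact hl)
        · rw [if_neg hlt] at hW
          injection hW with h
          subst h
          rw [if_pos (by omega)] at hg
          exact .var (by rw [← hg]; exact hl)
  · intro δ'' Γ M τ hM ih Γ₁ Γ₂ V V₀ hΓ hW
    subst hΓ
    cases V₀ with
    | var n =>
      simp only [Val.substV] at hW
      by_cases he : n = Γ₁.length
      · rw [if_pos he] at hW
        subst he
        refine ⟨.arrow δ'' τ, ?_, .var (getMid Γ₁ Γ₂ _)⟩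
        rw [← hW]
        exact .lam hM
      · rw [if_neg he] at hW
        split at hW <;> exact Val.noConfusion hW
    | lam M₀ =>
      simp only [Val.substV] at hW
      injection hW with h
      obtain ⟨δ, hVs, hM'⟩ := ih (δ'' :: Γ₁) Γ₂ (Val.shiftAux 0 V) M₀ rfl h
      exact ⟨δ, strengthen_thm.1 _ _ _ hVs [] (Γ₁ ++ Γ₂) δ'' V rfl rfl, .lam hM'⟩
  · intro Γ W Γ₁ Γ₂ V V₀ hΓ hW
    subst hΓ
    exact ⟨.omega, .omega, .omega⟩
  · intro Γ W δ δ' _ _ ih1 ih2 Γ₁ Γ₂ V V₀ hΓ hW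
    subst hΓ
    obtain ⟨δ₁, a1, b1⟩ := ih1 Γ₁ Γ₂ V V₀ rfl hW
    obtain ⟨δ₂, a2, b2⟩ := ih2 Γ₁ Γ₂ V V₀ rfl hW
    exact ⟨.inter δ₁ δ₂, .inter a1 a2,
      .inter (narrow_thm.1 _ _ _ b1 _ (ctxLE_mid Γ₁ Γ₂ .interLeft))
        (narrow_thm.1 _ _ _ b2 _ (ctxLE_mid Γ₁ Γ₂ .interRight))⟩
  · intro Γ W δ δ' _ hs ih Γ₁ Γ₂ V V₀ hΓ hW
    obtain ⟨δ₁, a, b⟩ := ih Γ₁ Γ₂ V V₀ hΓ hW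
    exact ⟨δ₁, a, .sub b hs⟩
  · intro Γ W δ σ _ ih Γ₁ Γ₂ V M hΓ hW
    subst hΓ
    cases M with
    | ret V₀ =>
      simp only [Comp.substC] at hW
      injection hW with h
      obtain ⟨δ₁, a, b⟩ := ih Γ₁ Γ₂ V V₀ rfl h
      exact ⟨δ₁, a, .ret b⟩
    | bind M₁ V₁ => simp only [Comp.substC] at hW; exact Comp.noConfusion hW
    | get ℓ M₁ => simp only [Comp.substC] at hW; exact Comp.noConfusion hW
    | set ℓ V₁ M₁ => simp only [Comp.substC] at hW; exact Comp.noConfusion hW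
  · intro Γ N σ δ' σ' W δ'' σ'' _ _ ih1 ih2 Γ₁ Γ₂ V M hΓ hW
    subst hΓ
    cases M with
    | bind M₁ V₁ =>
      simp only [Comp.substC] at hW
      injection hW with h1 h2
      obtain ⟨δ₁, a1, b1⟩ := ih1 Γ₁ Γ₂ V M₁ rfl h1
      obtain ⟨δ₂, a2, b2⟩ := ih2 Γ₁ Γ₂ V V₁ rfl h2
      exact ⟨.inter δ₁ δ₂, .inter a1 a2,
        .bind (narrow_thm.2 _ _ _ b1 _ (ctxLE_mid Γ₁ Γ₂ .interLeft))
          (narrow_thm.1 _ _ _ b2 _ (ctxLE_mid Γ₁ Γ₂ .interRight))⟩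
    | ret V₁ => simp only [Comp.substC] at hW; exact Comp.noConfusion hW
    | get ℓ M₁ => simp only [Comp.substC] at hW; exact Comp.noConfusion hW
    | set ℓ V₁ M₁ => simp only [Comp.substC] at hW; exact Comp.noConfusion hW
  · intro δ'' Γ N σ κ ℓ hM ih Γ₁ Γ₂ V M hΓ hW
    subst hΓ
    cases M with
    | get ℓ' M₀ =>
      simp only [Comp.substC] at hW
      injection hW with hℓ h
      subst hℓ
      obtain ⟨δ, hVs, hM'⟩ := ih (δ'' :: Γ₁) Γ₂ (Val.shiftAux 0 V) M₀ rfl h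
      exact ⟨δ, strengthen_thm.1 _ _ _ hVs [] (Γ₁ ++ Γ₂) δ'' V rfl rfl, .get hM'⟩
    | ret V₁ => simp only [Comp.substC] at hW; exact Comp.noConfusion hW
    | bind M₁ V₁ => simp only [Comp.substC] at hW; exact Comp.noConfusion hW
    | set ℓ' V₁ M₁ => simp only [Comp.substC] at hW; exact Comp.noConfusion hW
  · intro Γ W δ N ℓ σ κ _ _ hd ih1 ih2 Γ₁ Γ₂ V M hΓ hW
    subst hΓ
    cases M with
    | set ℓ' V₁ M₁ =>
      simp only [Comp.substC] at hW
      injection hW with hℓ h1 h2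
      subst hℓ
      obtain ⟨δ₁, a1, b1⟩ := ih1 Γ₁ Γ₂ V V₁ rfl h1
      obtain ⟨δ₂, a2, b2⟩ := ih2 Γ₁ Γ₂ V M₁ rfl h2
      exact ⟨.inter δ₁ δ₂, .inter a1 a2,
        .set (narrow_thm.1 _ _ _ b1 _ (ctxLE_mid Γ₁ Γ₂ .interLeft))
          (narrow_thm.2 _ _ _ b2 _ (ctxLE_mid Γ₁ Γ₂ .interRight)) hd⟩
    | ret V₁ => simp only [Comp.substC] at hW; exact Comp.noConfusion hW
    | bind M₁ V₁ => simp only [Comp.substC] at hW; exact Comp.noConfusion hW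
    | get ℓ' M₁ => simp only [Comp.substC] at hW; exact Comp.noConfusion hW
  · intro Γ N Γ₁ Γ₂ V M hΓ hW
    subst hΓ
    exact ⟨.omega, .omega, .omega⟩
  · intro Γ N τ τ' _ _ ih1 ih2 Γ₁ Γ₂ V M hΓ hW
    subst hΓ
    obtain ⟨δ₁, a1, b1⟩ := ih1 Γ₁ Γ₂ V M rfl hW
    obtain ⟨δ₂, a2, b2⟩ := ih2 Γ₁ Γ₂ V M rfl hW
    exact ⟨.inter δ₁ δ₂, .inter a1 a2,
      .inter (narrow_thm.2 _ _ _ b1 _ (ctxLE_mid Γ₁ Γ₂ .interLeft))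
        (narrow_thm.2 _ _ _ b2 _ (ctxLE_mid Γ₁ Γ₂ .interRight))⟩
  · intro Γ N τ τ' _ hs ih Γ₁ Γ₂ V M hΓ hW
    obtain ⟨δ₁, a, b⟩ := ih Γ₁ Γ₂ V M hΓ hW
    exact ⟨δ₁, a, .sub b hs⟩

/-- substitution and expansion. -/
theorem substitution_and_expansion :
    (∀ (Γ : Ctx) (δ : TyD) (M : Comp) (τ : TyT) (V : Val),
      TypC (δ :: Γ) M τ → TypV Γ V δ → TypC Γ (Comp.substC 0 V M) τ) ∧
    (∀ (Γ : Ctx) (M : Comp) (τ : TyT) (V : Val),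
      TypC Γ (Comp.substC 0 V M) τ →
      ∃ δ : TyD, TypV Γ V δ ∧ TypC (δ :: Γ) M τ) := by
  constructor
  · intro Γ δ M τ V hM hV
    exact subst_thm.2 _ _ _ hM [] δ Γ V rfl hV
  · intro Γ M τ V h
    exact expand_thm.2 _ _ _ h [] Γ V M rfl rfl
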